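/- arXiv:0707.1849 — 2 statements merged into one kernel-verified Lean document; each statement's English description precedes it below -/
import Mathlib

section
/- For any complex number z = a - i·θ·b with a ≥ 0, b ∈ ℝ, |b| ≤ a, and θ > 0, one has (1/(1+θ²)) · 1/(1+a) < Re(1/(1+z)) ≤ 1/(1+a). -/
open Complex

theorem re_one_div_one_add_ofReal_sub_I_mul (a c : ℝ) :
    (1 / (1 + ((a : ℂ) - I * c))).re = (1 + a) / ((1 + a) ^ 2 + c ^ 2) := by
  rw [one_div, inv_re, normSq_apply]
  simp only [add_re, one_re, sub_re, ofReal_re, mul_re, I_re, I_im, ofReal_im, add_im, one_im,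
    sub_im, mul_im]
  ring

theorem div_sq_add_sq_le_one_div {x : ℝ} (hx : 0 < x) (c : ℝ) :
    x / (x ^ 2 + c ^ 2) ≤ 1 / x := by
  rw [div_le_div_iff₀ (by positivity) hx]
  nlinarith [sq_nonneg c]

theorem one_div_one_add_sq_mul_one_div_lt {x c θ : ℝ} (hx : 0 < x) (hc : c ^ 2 < θ ^ 2 * x ^ 2) :
    1 / (1 + θ ^ 2) * (1 / x) < x / (x ^ 2 + c ^ 2) :=
  calc 1 / (1 + θ ^ 2) * (1 / x) = x / (x ^ 2 + θ ^ 2 * x ^ 2) := by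
        field_simp
    _ < x / (x ^ 2 + c ^ 2) := by gcongr

theorem stmt0_general (a b θ : ℝ) (hb : |b| ≤ a) (hθ : 0 < θ) :
    (1 / (1 + θ ^ 2)) * (1 / (1 + a)) < (1 / (1 + ((a : ℂ) - I * θ * b))).re ∧
      (1 / (1 + ((a : ℂ) - I * θ * b))).re ≤ 1 / (1 + a) := by
  have hx : 0 < 1 + a := by linarith [abs_nonneg b]
  have hb_lt : b ^ 2 < (1 + a) ^ 2 := sq_lt_sq' (by linarith [neg_abs_le b]) (by linarith [le_abs_self b])
  have hθb : (θ * b) ^ 2 < θ ^ 2 * (1 + a) ^ 2 := by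
    rw [mul_pow]
    exact mul_lt_mul_of_pos_left hb_lt (by positivity)
  rw [mul_assoc, ← ofReal_mul, re_one_div_one_add_ofReal_sub_I_mul]
  exact ⟨one_div_one_add_sq_mul_one_div_lt hx hθb, div_sq_add_sq_le_one_div hx _⟩

/-- For z = a - i·θ·b with a ≥ 0, |b| ≤ a, θ > 0:
    (1/(1+θ²))·1/(1+a) < Re(1/(1+z)) ≤ 1/(1+a). -/
theorem stmt0 (a b θ : ℝ) (ha : 0 ≤ a) (hb : |b| ≤ a) (hθ : 0 < θ) :
    (1 / (1 + θ ^ 2)) * (1 / (1 + a)) < (1 / (1 + ((a : ℂ) - I * θ * b))).re ∧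
      (1 / (1 + ((a : ℂ) - I * θ * b))).re ≤ 1 / (1 + a) :=
  stmt0_general a b θ hb hθ
end

section
/- Let α ∈ (0,1), θ = tan(απ/2), and for ξ ∈ ℝ^N define Ψ(ξ) = Σ_{l=1}^N |ξ_l|^α − i·θ·Σ_{l=1}^N |ξ_l|^α·sgn(ξ_l). Then there exist constants 0 < A₁ ≤ A₂ < ∞ (depending only on α and N) such that for all ξ ∈ ℝ^N: A₁·(1/(1+|ξ|^α))^N ≤ [Re(1/(1+Ψ(ξ)))]^N ≤ A₂·(1/(1+|ξ|^α))^N. -/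
/-!
With `S = ∑ |ξ_l|^α` and `T = ∑ |ξ_l|^α sgn ξ_l`, one has `Re (1/(1 + S - iθT)) =
(1 + S)/((1 + S)² + θ²T²)`, and `|T| ≤ S` pins this between `1/((1 + θ²)(1 + S))` and
`1/(1 + S)`. Since `α ≤ 1`, `x ↦ x^α` is subadditive, so `‖ξ‖^α ≤ S ≤ N‖ξ‖^α`; hence
`1 + S` is comparable to `1 + ‖ξ‖^α`, and taking `N`-th powers gives the claim.
-/

open Real Complex

open Finset in
theorem Real.rpow_sum_le_sum_rpow {ι : Type*} (s : Finset ι) {f : ι → ℝ}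
    (hf : ∀ i ∈ s, 0 ≤ f i) {p : ℝ} (hp : 0 < p) (hp1 : p ≤ 1) :
    (∑ i ∈ s, f i) ^ p ≤ ∑ i ∈ s, f i ^ p := by
  classical
  induction s using Finset.induction_on with
  | empty => simp [Real.zero_rpow hp.ne']
  | insert a s ha ih =>
    rw [sum_insert ha, sum_insert ha]
    have hs := fun i hi => hf i (mem_insert_of_mem hi)
    calc (f a + ∑ i ∈ s, f i) ^ p ≤ f a ^ p + (∑ i ∈ s, f i) ^ p :=
          Real.rpow_add_le_add_rpow (hf a (mem_insert_self a s)) (sum_nonneg hs) hp.le hp1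
      _ ≤ f a ^ p + ∑ i ∈ s, f i ^ p := by gcongr; exact ih hs

section EuclideanSpace

variable {ι : Type*} [Fintype ι]

theorem EuclideanSpace.norm_le_sum_abs (ξ : EuclideanSpace ℝ ι) : ‖ξ‖ ≤ ∑ l, |ξ l| := by
  rw [EuclideanSpace.norm_eq, Real.sqrt_le_left (Finset.sum_nonneg fun _ _ => abs_nonneg _)]
  simpa only [Real.norm_eq_abs] using
    Finset.sum_sq_le_sq_sum_of_nonneg fun l _ => abs_nonneg (ξ l)

theorem EuclideanSpace.norm_rpow_le_sum_abs_rpow (ξ : EuclideanSpace ℝ ι) {α : ℝ}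
    (hα : 0 < α) (hα1 : α ≤ 1) : ‖ξ‖ ^ α ≤ ∑ l, |ξ l| ^ α :=
  (Real.rpow_le_rpow (norm_nonneg ξ) ξ.norm_le_sum_abs hα.le).trans
    (Real.rpow_sum_le_sum_rpow _ (fun _ _ => abs_nonneg _) hα hα1)

theorem EuclideanSpace.sum_abs_rpow_le_card_mul_norm_rpow (ξ : EuclideanSpace ℝ ι) {α : ℝ}
    (hα : 0 ≤ α) : ∑ l, |ξ l| ^ α ≤ Fintype.card ι * ‖ξ‖ ^ α := by
  calc ∑ l, |ξ l| ^ α ≤ ∑ _l : ι, ‖ξ‖ ^ α :=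
        Finset.sum_le_sum fun l _ => Real.rpow_le_rpow (abs_nonneg _) (PiLp.norm_apply_le ξ l) hα
    _ = Fintype.card ι * ‖ξ‖ ^ α := by simp

end EuclideanSpace

theorem Real.abs_sum_mul_sign_le {ι : Type*} (s : Finset ι) (f g : ι → ℝ) :
    |∑ i ∈ s, f i * Real.sign (g i)| ≤ ∑ i ∈ s, |f i| := by
  refine (Finset.abs_sum_le_sum_abs _ _).trans (Finset.sum_le_sum fun i _ => ?_)
  rw [abs_mul]
  refine mul_le_of_le_one_right (abs_nonneg _) ?_
  rcases Real.sign_apply_eq (g i) with h | h | h <;> simp [h]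

theorem Complex.re_one_div_one_add_sub_I_mul (S c T : ℝ) :
    (1 / (1 + ((S : ℂ) - I * (c : ℂ) * (T : ℂ)))).re = (1 + S) / ((1 + S) ^ 2 + (c * T) ^ 2) := by
  have hz : 1 + ((S : ℂ) - I * c * T) = ⟨1 + S, -(c * T)⟩ := by apply Complex.ext <;> simp
  rw [hz, Complex.div_re, Complex.normSq_mk]
  simp only [one_re, one_im]
  ring

theorem one_add_div_one_add_sq_add_sq_mem_Icc {S c T : ℝ} (hS : 0 ≤ S) (hT : |T| ≤ S) :
    (1 + S) / ((1 + S) ^ 2 + (c * T) ^ 2) ∈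
      Set.Icc (1 / ((1 + c ^ 2) * (1 + S))) (1 / (1 + S)) := by
  have hS1 : 0 < 1 + S := by linarith
  have hT2 : T ^ 2 ≤ (1 + S) ^ 2 :=
    sq_le_sq' (by linarith [neg_abs_le T]) (by linarith [le_abs_self T])
  constructor
  · rw [div_le_div_iff₀ (by positivity) (by positivity)]
    nlinarith [mul_le_mul_of_nonneg_left hT2 (sq_nonneg c)]
  · rw [div_le_div_iff₀ (by positivity) hS1]
    nlinarith [sq_nonneg (c * T)]

theorem stmt2_general (α : ℝ) (hα : α ∈ Set.Ioo (0 : ℝ) 1) (N : ℕ) :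
    ∃ A₁ A₂ : ℝ, 0 < A₁ ∧ A₁ ≤ A₂ ∧
      ∀ ξ : EuclideanSpace ℝ (Fin N),
        A₁ * (1 / (1 + ‖ξ‖ ^ α)) ^ N ≤
            ((1 / (1 + (((∑ l, |ξ l| ^ α : ℝ) : ℂ) -
              Complex.I * (Real.tan (α * π / 2) : ℝ) *
                ((∑ l, |ξ l| ^ α * Real.sign (ξ l) : ℝ) : ℂ)))).re) ^ N ∧
          ((1 / (1 + (((∑ l, |ξ l| ^ α : ℝ) : ℂ) -
              Complex.I * (Real.tan (α * π / 2) : ℝ) *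
                ((∑ l, |ξ l| ^ α * Real.sign (ξ l) : ℝ) : ℂ)))).re) ^ N ≤
            A₂ * (1 / (1 + ‖ξ‖ ^ α)) ^ N := by
  obtain ⟨hα0, hα1⟩ := hα
  set θ := Real.tan (α * π / 2)
  set c : ℝ := 1 / ((1 + θ ^ 2) * (N + 1))
  have hc : 0 < c := by positivity
  refine ⟨c ^ N, 1, pow_pos hc N, pow_le_one₀ hc.le ?_, fun ξ => ?_⟩
  · exact div_le_one_of_le₀ (by nlinarith [sq_nonneg θ]) (by positivity)
  set S := ∑ l, |ξ l| ^ α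
  set u := ‖ξ‖ ^ α
  have hu : 0 ≤ u := Real.rpow_nonneg (norm_nonneg ξ) α
  have huS : u ≤ S := ξ.norm_rpow_le_sum_abs_rpow hα0 hα1.le
  have hSu : S ≤ N * u := by
    simpa using ξ.sum_abs_rpow_le_card_mul_norm_rpow hα0.le
  have hT : |∑ l, |ξ l| ^ α * Real.sign (ξ l)| ≤ S := by
    simpa only [abs_of_nonneg (Real.rpow_nonneg (abs_nonneg _) α)] using
      Real.abs_sum_mul_sign_le Finset.univ (fun l => |ξ l| ^ α) ξ
  rw [Complex.re_one_div_one_add_sub_I_mul]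
  obtain ⟨hlow, hupp⟩ := one_add_div_one_add_sq_add_sq_mem_Icc (c := θ) (hu.trans huS) hT
  constructor
  · rw [← mul_pow]
    refine pow_le_pow_left₀ (by positivity) (le_trans ?_ hlow) N
    rw [div_mul_div_comm, one_mul, mul_assoc]
    have hSN : 1 + S ≤ (N + 1) * (1 + u) := by nlinarith
    exact one_div_le_one_div_of_le (by positivity) (by gcongr)
  · rw [one_mul]
    refine pow_le_pow_left₀ (by positivity) (hupp.trans ?_) N
    exact one_div_le_one_div_of_le (by positivity) (by linarith)

/-- Two-sided bound for the N-th power of the real part of 1/(1+Ψ(ξ)), where Ψ is the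
    Lévy exponent of a component of the saturated additive α-stable subordinator. -/
theorem stmt2 (α : ℝ) (hα : α ∈ Set.Ioo (0 : ℝ) 1) (N : ℕ) (hN : 1 ≤ N) :
    ∃ A₁ A₂ : ℝ, 0 < A₁ ∧ A₁ ≤ A₂ ∧
      ∀ ξ : EuclideanSpace ℝ (Fin N),
        A₁ * (1 / (1 + ‖ξ‖ ^ α)) ^ N ≤
            ((1 / (1 + (((∑ l, |ξ l| ^ α : ℝ) : ℂ) -
              Complex.I * (Real.tan (α * π / 2) : ℝ) *
                ((∑ l, |ξ l| ^ α * Real.sign (ξ l) : ℝ) : ℂ)))).re) ^ N ∧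
          ((1 / (1 + (((∑ l, |ξ l| ^ α : ℝ) : ℂ) -
              Complex.I * (Real.tan (α * π / 2) : ℝ) *
                ((∑ l, |ξ l| ^ α * Real.sign (ξ l) : ℝ) : ℂ)))).re) ^ N ≤
            A₂ * (1 / (1 + ‖ξ‖ ^ α)) ^ N :=
  stmt2_general α hα N
end
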